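/- Let g be a Riemannian metric on an open set U ⊆ ℝ³, let ξ be a smooth vector field on U with |ξ|²_g > 0 and Euclidean divergence div ξ = 0, let C : ℝ → ℝ be smooth, and let ψ : U → ℝ be smooth with ξ · ∇ψ = 0 on U. Define B_g := |ξ|_g^{-2}(C(ψ) ξ + √|g| (ξ ×_g ∇_g ψ)). Then the Euclidean divergence of B_g satisfies div B_g = −|ξ|_g^{-2} (L_ξ g)(ξ, B_g) on U. In particular, if ξ is a g-Killing field ((L_ξ g)_{ij} = 0), then div B_g = 0. -/

import Mathlib

noncomputable section

/-- Points of `ℝ³`. -/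
abbrev Pt : Type := Fin 3 → ℝ

/-- Vector fields on `ℝ³`. -/
abbrev VF : Type := Pt → Pt

/-- A (matrix-valued) metric on `ℝ³`. -/
abbrev Met3 : Type := Pt → Matrix (Fin 3) (Fin 3) ℝ

/-- Partial derivative `∂ᵢ f` in the standard coordinates. -/
def pd (i : Fin 3) (f : Pt → ℝ) (x : Pt) : ℝ := fderiv ℝ f x (Pi.single i 1)

/-- The Levi-Civita symbol `ε_{ijk}`. -/
def eps (i j k : Fin 3) : ℝ :=
  ((j.val : ℝ) - (i.val : ℝ)) * ((k.val : ℝ) - (i.val : ℝ)) * ((k.val : ℝ) - (j.val : ℝ)) / 2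

/-- `g` is a smooth Riemannian metric on `U`: smooth coefficients, symmetric
positive-definite at every point of `U`. -/
def SmoothMetricOn (g : Met3) (U : Set Pt) : Prop :=
  (∀ i j, ContDiffOn ℝ (⊤ : ℕ∞) (fun x => g x i j) U) ∧ (∀ x ∈ U, (g x).PosDef)

/-- `√|g|`, square root of the determinant of the metric. -/
def sdet (g : Met3) (x : Pt) : ℝ := Real.sqrt (g x).det

/-- Metric dot product `X ·_g Y = g_{ij} X^i Y^j`. -/
def gdot (g : Met3) (X Y : VF) (x : Pt) : ℝ := ∑ i, ∑ j, g x i j * X x i * Y x j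

/-- `|X|²_g`. -/
def gnormSq (g : Met3) (X : VF) (x : Pt) : ℝ := gdot g X X x

/-- Metric gradient `(∇_g f)^i = g^{ij} ∂_j f`. -/
def ggrad (g : Met3) (f : Pt → ℝ) : VF := fun x i => ∑ j, (g x)⁻¹ i j * pd j f x

/-- Metric cross product `(X ×_g Y)^k = √|g| g^{kℓ} ε_{ijℓ} X^i Y^j`. -/
def gcross (g : Met3) (X Y : VF) : VF :=
  fun x k => sdet g x * ∑ l, ∑ i, ∑ j, (g x)⁻¹ k l * eps i j l * X x i * Y x j

/-- Metric divergence `div_g X = |g|^{-1/2} ∂_i(√|g| X^i)`. -/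
def gdiv (g : Met3) (X : VF) (x : Pt) : ℝ :=
  (sdet g x)⁻¹ * ∑ i, pd i (fun y => sdet g y * X y i) x

/-- Metric curl `(curl_g X)^m = √|g| g^{mn} g^{ik} g^{jℓ} ε_{kℓn} ∂_i(g_{jp}X^p)`. -/
def gcurl (g : Met3) (X : VF) : VF :=
  fun x m => sdet g x * ∑ n, ∑ i, ∑ k, ∑ j, ∑ l,
    (g x)⁻¹ m n * (g x)⁻¹ i k * (g x)⁻¹ j l * eps k l n *
      pd i (fun y => ∑ p, g y j p * X y p) x

/-- Christoffel symbols `Γ^k_{ij}`. -/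
def christoffel (g : Met3) (x : Pt) (k i j : Fin 3) : ℝ :=
  (1 / 2) * ∑ l, (g x)⁻¹ k l *
    (pd i (fun y => g y j l) x + pd j (fun y => g y i l) x - pd l (fun y => g y i j) x)

/-- Covariant derivative `(∇_X Y)^i = X^j ∂_j Y^i + Γ^i_{jk} X^j Y^k`. -/
def covD (g : Met3) (X Y : VF) : VF :=
  fun x i => (∑ j, X x j * pd j (fun y => Y y i) x)
    + ∑ j, ∑ k, christoffel g x i j k * X x j * Y x k

/-- Lie derivative of a vector field, `(L_X Y)^i = X^j ∂_j Y^i − Y^j ∂_j X^i`. -/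
def lieVF (X Y : VF) : VF :=
  fun x i => (∑ j, X x j * pd j (fun y => Y y i) x) - ∑ j, Y x j * pd j (fun y => X y i) x

/-- Deformation tensor `(L_X g)_{ij} = ∂_i(g_{jℓ}X^ℓ) + ∂_j(g_{iℓ}X^ℓ) − 2Γ^k_{ij} g_{kℓ}X^ℓ`. -/
def lieMet (g : Met3) (X : VF) (x : Pt) (i j : Fin 3) : ℝ :=
  pd i (fun y => ∑ l, g y j l * X y l) x + pd j (fun y => ∑ l, g y i l * X y l) x
    - 2 * ∑ k, ∑ l, christoffel g x k i j * g x k l * X x l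

/-- Pairing `(L_X g)(A, B) = (L_X g)_{ij} A^i B^j`. -/
def lieMetPair (g : Met3) (X A B : VF) (x : Pt) : ℝ :=
  ∑ i, ∑ j, lieMet g X x i j * A x i * B x j

/-- `ξ` is a `g`-Killing field on `U`. -/
def IsKillingOn (g : Met3) (ξ : VF) (U : Set Pt) : Prop :=
  ∀ x ∈ U, ∀ i j, lieMet g ξ x i j = 0

/-- Euclidean dot product. -/
def edot (X Y : VF) (x : Pt) : ℝ := ∑ i, X x i * Y x i

/-- Euclidean gradient. -/
def egrad (f : Pt → ℝ) : VF := fun x i => pd i f x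

/-- Euclidean cross product. -/
def ecross (X Y : VF) : VF := fun x k => ∑ i, ∑ j, eps i j k * X x i * Y x j

/-- Euclidean divergence. -/
def ediv (X : VF) (x : Pt) : ℝ := ∑ i, pd i (fun y => X y i) x

/-- Euclidean curl. -/
def ecurl (X : VF) : VF := fun x m => ∑ i, ∑ j, eps i j m * pd i (fun y => X y j) x

/-- Euclidean deformation tensor pairing `(L_ξ δ)(A,B) = A^i (∂_i ξ^j + ∂_j ξ^i) B^j`. -/
def lieEuclPair (ξ A B : VF) (x : Pt) : ℝ :=
  ∑ i, ∑ j, A x i * (pd i (fun y => ξ y j) x + pd j (fun y => ξ y i) x) * B x j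

/-- The magnetic field ansatz `B_g = |ξ|_g^{-2} (C(ψ) ξ + √|g| (ξ ×_g ∇_g ψ))`. -/
def Bg (g : Met3) (ξ : VF) (C : ℝ → ℝ) (ψ : Pt → ℝ) : VF :=
  fun x i => (gnormSq g ξ x)⁻¹ * (C (ψ x) * ξ x i + sdet g x * gcross g ξ (ggrad g ψ) x i)


@[simp] lemma eps_000 : eps 0 0 0 = 0 := by norm_num [eps]
@[simp] lemma eps_001 : eps 0 0 1 = 0 := by norm_num [eps]
@[simp] lemma eps_002 : eps 0 0 2 = 0 := by norm_num [eps]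
@[simp] lemma eps_010 : eps 0 1 0 = 0 := by norm_num [eps]
@[simp] lemma eps_011 : eps 0 1 1 = 0 := by norm_num [eps]
@[simp] lemma eps_012 : eps 0 1 2 = 1 := by norm_num [eps]
@[simp] lemma eps_020 : eps 0 2 0 = 0 := by norm_num [eps]
@[simp] lemma eps_021 : eps 0 2 1 = -1 := by norm_num [eps]
@[simp] lemma eps_022 : eps 0 2 2 = 0 := by norm_num [eps]
@[simp] lemma eps_100 : eps 1 0 0 = 0 := by norm_num [eps]
@[simp] lemma eps_101 : eps 1 0 1 = 0 := by norm_num [eps]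
@[simp] lemma eps_102 : eps 1 0 2 = -1 := by norm_num [eps]
@[simp] lemma eps_110 : eps 1 1 0 = 0 := by norm_num [eps]
@[simp] lemma eps_111 : eps 1 1 1 = 0 := by norm_num [eps]
@[simp] lemma eps_112 : eps 1 1 2 = 0 := by norm_num [eps]
@[simp] lemma eps_120 : eps 1 2 0 = 1 := by norm_num [eps]
@[simp] lemma eps_121 : eps 1 2 1 = 0 := by norm_num [eps]
@[simp] lemma eps_122 : eps 1 2 2 = 0 := by norm_num [eps]
@[simp] lemma eps_200 : eps 2 0 0 = 0 := by norm_num [eps]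
@[simp] lemma eps_201 : eps 2 0 1 = 1 := by norm_num [eps]
@[simp] lemma eps_202 : eps 2 0 2 = 0 := by norm_num [eps]
@[simp] lemma eps_210 : eps 2 1 0 = -1 := by norm_num [eps]
@[simp] lemma eps_211 : eps 2 1 1 = 0 := by norm_num [eps]
@[simp] lemma eps_212 : eps 2 1 2 = 0 := by norm_num [eps]
@[simp] lemma eps_220 : eps 2 2 0 = 0 := by norm_num [eps]
@[simp] lemma eps_221 : eps 2 2 1 = 0 := by norm_num [eps]
@[simp] lemma eps_222 : eps 2 2 2 = 0 := by norm_num [eps]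

open Filter Topology

section pdCalc

variable {x : Pt} {f h : Pt → ℝ} {i : Fin 3}

lemma pd_congr (he : f =ᶠ[nhds x] h) : pd i f x = pd i h x := by
  unfold pd; rw [he.fderiv_eq]

lemma pd_add (hf : DifferentiableAt ℝ f x) (hh : DifferentiableAt ℝ h x) :
    pd i (fun y => f y + h y) x = pd i f x + pd i h x := by
  unfold pd; rw [fderiv_fun_add hf hh]; simp

lemma pd_mul (hf : DifferentiableAt ℝ f x) (hh : DifferentiableAt ℝ h x) :
    pd i (fun y => f y * h y) x = pd i f x * h x + f x * pd i h x := by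
  unfold pd; rw [fderiv_fun_mul hf hh]; simp; ring

lemma pd_const_mul (hf : DifferentiableAt ℝ f x) (c : ℝ) :
    pd i (fun y => c * f y) x = c * pd i f x := by
  unfold pd; rw [fderiv_const_mul hf c]; simp

lemma pd_sum {n : ℕ} {A : Fin n → Pt → ℝ} (hA : ∀ j, DifferentiableAt ℝ (A j) x) :
    pd i (fun y => ∑ j, A j y) x = ∑ j, pd i (A j) x := by
  unfold pd; rw [fderiv_fun_sum (fun j _ => hA j)]; simp

lemma pd_inv (hf : DifferentiableAt ℝ f x) (h0 : f x ≠ 0) :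
    pd i (fun y => (f y)⁻¹) x = -((f x)^2)⁻¹ * pd i f x := by
  have hc : HasFDerivAt (fun y => (f y)⁻¹) (-((f x)^2)⁻¹ • fderiv ℝ f x) x := by
    exact (hasDerivAt_inv h0).comp_hasFDerivAt x hf.hasFDerivAt
  unfold pd
  rw [hc.fderiv]
  simp

lemma pd_comp {C : ℝ → ℝ} (hC : DifferentiableAt ℝ C (f x)) (hf : DifferentiableAt ℝ f x) :
    pd i (fun y => C (f y)) x = deriv C (f x) * pd i f x := by
  have hc : HasFDerivAt (fun y => C (f y)) (deriv C (f x) • fderiv ℝ f x) x := by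
    exact hC.hasDerivAt.comp_hasFDerivAt x hf.hasFDerivAt
  unfold pd
  rw [hc.fderiv]
  simp

lemma pd_diff {U : Set Pt} (hU : IsOpen U) (hx : x ∈ U) (hf : ContDiffOn ℝ (⊤ : ℕ∞) f U) (b : Fin 3) :
    DifferentiableAt ℝ (fun y => pd b f y) x := by
  have h2 : ContDiffAt ℝ 1 (fderiv ℝ f) x :=
    (hf.contDiffAt (hU.mem_nhds hx)).fderiv_right (WithTop.coe_le_coe.mpr le_top)
  exact (h2.differentiableAt one_ne_zero).clm_apply (differentiableAt_const _)

lemma pd_symm {U : Set Pt} (hU : IsOpen U) (hx : x ∈ U) (hf : ContDiffOn ℝ (⊤ : ℕ∞) f U)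
    (a b : Fin 3) :
    pd a (fun y => pd b f y) x = pd b (fun y => pd a f y) x := by
  have h3 : DifferentiableAt ℝ (fderiv ℝ f) x :=
    (((hf.contDiffAt (hU.mem_nhds hx)).fderiv_right (WithTop.coe_le_coe.mpr le_top))).differentiableAt one_ne_zero
  have hev : ∀ᶠ y in 𝓝 x, HasFDerivAt f (fderiv ℝ f y) y := by
    filter_upwards [hU.mem_nhds hx] with y hy
    exact ((hf.contDiffAt (hU.mem_nhds hy)).differentiableAt (by simp)).hasFDerivAt
  have hsymm := second_derivative_symmetric_of_eventually hev h3.hasFDerivAt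
    (Pi.single a 1) (Pi.single b 1)
  have key : ∀ c d : Fin 3, pd c (fun y => pd d f y) x
      = (fderiv ℝ (fderiv ℝ f) x (Pi.single c 1)) (Pi.single d 1) := by
    intro c d
    have hc : HasFDerivAt (fun y => (fderiv ℝ f y) (Pi.single d 1))
        ((ContinuousLinearMap.apply ℝ ℝ (Pi.single d 1)).comp (fderiv ℝ (fderiv ℝ f) x)) x := by
      exact (ContinuousLinearMap.apply ℝ ℝ (Pi.single d 1)).hasFDerivAt.comp x h3.hasFDerivAt
    simp only [pd]
    rw [hc.fderiv]
    rfl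
  rw [key a b, key b a, hsymm]

end pdCalc


set_option maxHeartbeats 2000000 in
lemma key0 (M : Matrix (Fin 3) (Fin 3) ℝ)
    (h10 : M 1 0 = M 0 1) (h20 : M 2 0 = M 0 2) (h21 : M 2 1 = M 1 2)
    (v w : Fin 3 → ℝ) (k : Fin 3) :
    ∑ l, ∑ i, ∑ j, M.adjugate k l * eps i j l * v i * (∑ m, M.adjugate j m * w m)
      = M.det * ∑ a, ∑ b, eps a b k * (∑ l, M a l * v l) * w b := by
  fin_cases k <;>
  · simp only [Fin.sum_univ_three, Matrix.adjugate_fin_three, Matrix.det_fin_three,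
      Matrix.of_apply, Matrix.cons_val', Matrix.cons_val_zero, Matrix.cons_val_one,
      Matrix.head_cons, Matrix.empty_val', Matrix.cons_val_fin_one, Matrix.head_fin_const,
      Matrix.cons_val_two, Matrix.tail_cons, Fin.zero_eta, Fin.mk_one, Fin.reduceFinMk,
      Fin.isValue,
      eps_000, eps_001, eps_002, eps_010, eps_011, eps_012, eps_020, eps_021, eps_022,
      eps_100, eps_101, eps_102, eps_110, eps_111, eps_112, eps_120, eps_121, eps_122,
      eps_200, eps_201, eps_202, eps_210, eps_211, eps_212, eps_220, eps_221, eps_222,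
      h10, h20, h21]
    ring

set_option maxHeartbeats 2000000 in
lemma key1 (M : Matrix (Fin 3) (Fin 3) ℝ)
    (hs : ∀ i j, M i j = M j i) (hd : M.det ≠ 0) (v w : Fin 3 → ℝ) (k : Fin 3) :
    M.det * ∑ l, ∑ i, ∑ j, M⁻¹ k l * eps i j l * v i * (∑ m, M⁻¹ j m * w m)
      = ∑ a, ∑ b, eps a b k * (∑ l, M a l * v l) * w b := by
  have hinv : ∀ i j, M⁻¹ i j = M.det⁻¹ * M.adjugate i j := by
    intro i j
    rw [Matrix.inv_def, Ring.inverse_eq_inv']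
    simp
  have e : (∑ l, ∑ i, ∑ j, M⁻¹ k l * eps i j l * v i * (∑ m, M⁻¹ j m * w m))
      = M.det⁻¹ * M.det⁻¹ *
        ∑ l, ∑ i, ∑ j, M.adjugate k l * eps i j l * v i * (∑ m, M.adjugate j m * w m) := by
    simp only [Fin.sum_univ_three, hinv]
    ring
  rw [e, key0 M (hs 1 0) (hs 2 0) (hs 2 1) v w k]
  field_simp

set_option maxHeartbeats 2000000 in
lemma lieContract (U : Set Pt) (hU : IsOpen U) (g : Met3) (hg : SmoothMetricOn g U)
    (ξ : VF) (hξ : ContDiffOn ℝ (⊤ : ℕ∞) ξ U) {x : Pt} (hx : x ∈ U) (j : Fin 3) :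
    ∑ i, ξ x i * lieMet g ξ x i j
      = (∑ l, ξ x l * pd l (fun y => ∑ m, g y j m * ξ y m) x)
        + ∑ l, (∑ m, g x l m * ξ x m) * pd j (fun y => ξ y l) x := by
  have hsymU : ∀ y ∈ U, ∀ a b, g y a b = g y b a := by
    intro y hy a b
    have := (hg.2 y hy).1.apply b a
    simpa using this
  have hgd : ∀ a b, DifferentiableAt ℝ (fun z => g z a b) x := fun a b =>
    ((hg.1 a b).contDiffAt (hU.mem_nhds hx)).differentiableAt (by simp)
  have hξd : ∀ a, DifferentiableAt ℝ (fun z => ξ z a) x := fun a =>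
    (((contDiffOn_pi.mp hξ) a).contDiffAt (hU.mem_nhds hx)).differentiableAt (by simp)
  have hDη : ∀ a b, pd b (fun y => ∑ m, g y a m * ξ y m) x
      = ∑ m, (pd b (fun y => g y a m) x * ξ x m + g x a m * pd b (fun y => ξ y m) x) := by
    intro a b
    rw [pd_sum (fun m => (hgd a m).fun_mul (hξd m))]
    exact Finset.sum_congr rfl fun m _ => pd_mul (hgd a m) (hξd m)
  have hdet : (g x).det ≠ 0 := (hg.2 x hx).det_pos.ne'
  have hT : (g x).transpose = g x := Matrix.ext fun a b => hsymU x hx b a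
  have hinvT : ∀ a b, (g x)⁻¹ a b = (g x)⁻¹ b a := by
    intro a b
    have h1 : ((g x)⁻¹).transpose = (g x)⁻¹ := by
      rw [Matrix.transpose_nonsing_inv, hT]
    have h2 := congrFun (congrFun h1 b) a
    simpa [Matrix.transpose_apply] using h2
  have e : ∀ a b, ∑ k, (g x)⁻¹ a k * g x k b = if a = b then (1:ℝ) else 0 := by
    intro a b
    have h1 := Matrix.nonsing_inv_mul (g x) (Ne.isUnit hdet)
    have h2 := congrFun (congrFun h1 a) b
    simpa [Matrix.mul_apply, Matrix.one_apply] using h2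
  have hb : ∀ m, ∑ k, (g x)⁻¹ k m * (∑ l, g x k l * ξ x l) = ξ x m := by
    intro m
    have e0 := e m 0; have e1 := e m 1; have e2 := e m 2
    simp only [Fin.sum_univ_three] at e0 e1 e2 ⊢
    rw [hinvT 0 m, hinvT 1 m, hinvT 2 m]
    fin_cases m <;>
      simp only [Fin.zero_eta, Fin.mk_one, Fin.reduceFinMk, Fin.isValue, Fin.reduceEq, reduceIte] at e0 e1 e2 ⊢ <;>
      norm_num at e0 e1 e2 ⊢ <;>
      linear_combination ξ x 0 * e0 + ξ x 1 * e1 + ξ x 2 * e2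
  have hb0 := hb 0; have hb1 := hb 1; have hb2 := hb 2
  have s10 : g x 1 0 = g x 0 1 := hsymU x hx 1 0
  have s20 : g x 2 0 = g x 0 2 := hsymU x hx 2 0
  have s21 : g x 2 1 = g x 1 2 := hsymU x hx 2 1
  have hds10 : ∀ c : Fin 3, pd c (fun y => g y 1 0) x = pd c (fun y => g y 0 1) x := fun c =>
    pd_congr (by filter_upwards [hU.mem_nhds hx] with y hy; exact hsymU y hy 1 0)
  have hds20 : ∀ c : Fin 3, pd c (fun y => g y 2 0) x = pd c (fun y => g y 0 2) x := fun c =>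
    pd_congr (by filter_upwards [hU.mem_nhds hx] with y hy; exact hsymU y hy 2 0)
  have hds21 : ∀ c : Fin 3, pd c (fun y => g y 2 1) x = pd c (fun y => g y 1 2) x := fun c =>
    pd_congr (by filter_upwards [hU.mem_nhds hx] with y hy; exact hsymU y hy 2 1)
  simp only [Fin.sum_univ_three, s10, s20, s21] at hb0 hb1 hb2
  fin_cases j
  · simp only [lieMet, christoffel, hDη]
    simp only [Fin.sum_univ_three, Fin.isValue, Fin.zero_eta, Fin.mk_one, Fin.reduceFinMk,
      s10, s20, s21, hds10, hds20, hds21]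
    linear_combination (-((ξ x 0 * (pd 0 (fun y => g y 0 0) x + pd 0 (fun y => g y 0 0) x - pd 0 (fun y => g y 0 0) x) + ξ x 1 * (pd 1 (fun y => g y 0 0) x + pd 0 (fun y => g y 0 1) x - pd 0 (fun y => g y 0 1) x) + ξ x 2 * (pd 2 (fun y => g y 0 0) x + pd 0 (fun y => g y 0 2) x - pd 0 (fun y => g y 0 2) x)))) * hb0 + (-((ξ x 0 * (pd 0 (fun y => g y 0 1) x + pd 0 (fun y => g y 0 1) x - pd 1 (fun y => g y 0 0) x) + ξ x 1 * (pd 1 (fun y => g y 0 1) x + pd 0 (fun y => g y 1 1) x - pd 1 (fun y => g y 0 1) x) + ξ x 2 * (pd 2 (fun y => g y 0 1) x + pd 0 (fun y => g y 1 2) x - pd 1 (fun y => g y 0 2) x)))) * hb1 + (-((ξ x 0 * (pd 0 (fun y => g y 0 2) x + pd 0 (fun y => g y 0 2) x - pd 2 (fun y => g y 0 0) x) + ξ x 1 * (pd 1 (fun y => g y 0 2) x + pd 0 (fun y => g y 1 2) x - pd 2 (fun y => g y 0 1) x) + ξ x 2 * (pd 2 (fun y => g y 0 2) x + pd 0 (fun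 y => g y 2 2) x - pd 2 (fun y => g y 0 2) x)))) * hb2
  · simp only [lieMet, christoffel, hDη]
    simp only [Fin.sum_univ_three, Fin.isValue, Fin.zero_eta, Fin.mk_one, Fin.reduceFinMk,
      s10, s20, s21, hds10, hds20, hds21]
    linear_combination (-((ξ x 0 * (pd 0 (fun y => g y 0 1) x + pd 1 (fun y => g y 0 0) x - pd 0 (fun y => g y 0 1) x) + ξ x 1 * (pd 1 (fun y => g y 0 1) x + pd 1 (fun y => g y 0 1) x - pd 0 (fun y => g y 1 1) x) + ξ x 2 * (pd 2 (fun y => g y 0 1) x + pd 1 (fun y => g y 0 2) x - pd 0 (fun y => g y 1 2) x)))) * hb0 + (-((ξ x 0 * (pd 0 (fun y => g y 1 1) x + pd 1 (fun y => g y 0 1) x - pd 1 (fun y => g y 0 1) x) + ξ x 1 * (pd 1 (fun y => g y 1 1) x + pd 1 (fun y => g y 1 1) x - pd 1 (fun y => g y 1 1) x) + ξ x 2 * (pd 2 (fun y => g y 1 1) x + pd 1 (fun y => g y 1 2) x - pd 1 (fun y => g y 1 2) x)))) * hb1 + (-((ξ x 0 * (pd 0 (fun y => g y 1 2) x + pd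 1 (fun y => g y 0 2) x - pd 2 (fun y => g y 0 1) x) + ξ x 1 * (pd 1 (fun y => g y 1 2) x + pd 1 (fun y => g y 1 2) x - pd 2 (fun y => g y 1 1) x) + ξ x 2 * (pd 2 (fun y => g y 1 2) x + pd 1 (fun y => g y 2 2) x - pd 2 (fun y => g y 1 2) x)))) * hb2
  · simp only [lieMet, christoffel, hDη]
    simp only [Fin.sum_univ_three, Fin.isValue, Fin.zero_eta, Fin.mk_one, Fin.reduceFinMk,
      s10, s20, s21, hds10, hds20, hds21]
    linear_combination (-((ξ x 0 * (pd 0 (fun y => g y 0 2) x + pd 2 (fun y => g y 0 0) x - pd 0 (fun y => g y 0 2) x) + ξ x 1 * (pd 1 (fun y => g y 0 2) x + pd 2 (fun y => g y 0 1) x - pd 0 (fun y => g y 1 2) x) + ξ x 2 * (pd 2 (fun y => g y 0 2) x + pd 2 (fun y => g y 0 2) x - pd 0 (fun y => g y 2 2) x)))) * hb0 + (-((ξ x 0 * (pd 0 (fun y => g y 1 2) x + pd 2 (fun y => g y 0 1) x - pd 1 (fun y => g y 0 2) x) + ξ x 1 * (pd 1 (fun y => g y 1 2) x + pd 2 (fun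 y => g y 1 1) x - pd 1 (fun y => g y 1 2) x) + ξ x 2 * (pd 2 (fun y => g y 1 2) x + pd 2 (fun y => g y 1 2) x - pd 1 (fun y => g y 2 2) x)))) * hb1 + (-((ξ x 0 * (pd 0 (fun y => g y 2 2) x + pd 2 (fun y => g y 0 2) x - pd 2 (fun y => g y 0 2) x) + ξ x 1 * (pd 1 (fun y => g y 2 2) x + pd 2 (fun y => g y 1 2) x - pd 2 (fun y => g y 1 2) x) + ξ x 2 * (pd 2 (fun y => g y 2 2) x + pd 2 (fun y => g y 2 2) x - pd 2 (fun y => g y 2 2) x)))) * hb2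

lemma BgEq (U : Set Pt) (g : Met3) (hg : SmoothMetricOn g U)
    (ξ : VF) (C : ℝ → ℝ) (ψ : Pt → ℝ) {x : Pt} (hx : x ∈ U) (k : Fin 3) :
    Bg g ξ C ψ x k = (gnormSq g ξ x)⁻¹ *
      (C (ψ x) * ξ x k
        + ∑ a, ∑ b, eps a b k * ((∑ m, g x a m * ξ x m) * pd b ψ x)) := by
  have hsymx : ∀ a b, g x a b = g x b a := by
    intro a b
    have := (hg.2 x hx).1.apply b a
    simpa using this
  have hdet : (g x).det ≠ 0 := (hg.2 x hx).det_pos.ne'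
  have hsd : sdet g x * sdet g x = (g x).det :=
    Real.mul_self_sqrt (hg.2 x hx).det_pos.le
  unfold Bg
  congr 2
  unfold gcross ggrad
  rw [← mul_assoc, hsd]
  have hk : (g x).det *
        ∑ l, ∑ i, ∑ j, (g x)⁻¹ k l * eps i j l * ξ x i * ∑ m, (g x)⁻¹ j m * pd m ψ x
      = ∑ a, ∑ b, eps a b k * (∑ l, g x a l * ξ x l) * pd b ψ x := by
    simpa using key1 (g x) hsymx hdet (ξ x) (fun m => pd m ψ x) k
  rw [hk]
  exact Finset.sum_congr rfl fun a _ => Finset.sum_congr rfl fun b _ => (mul_assoc _ _ _)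

lemma algDK (gm : Fin 3 → Fin 3 → ℝ)
    (hs10 : gm 1 0 = gm 0 1) (hs20 : gm 2 0 = gm 0 2) (hs21 : gm 2 1 = gm 1 2)
    (xv : Fin 3 → ℝ) (Dg : Fin 3 → Fin 3 → Fin 3 → ℝ) (Dx : Fin 3 → Fin 3 → ℝ)
    (Dn : Fin 3 → Fin 3 → ℝ)
    (hDn : ∀ a k, Dn a k = ∑ m, (Dg k a m * xv m + gm a m * Dx m k))
    (pdF : Fin 3 → ℝ)
    (hpdF : ∀ k, pdF k = ∑ a, ∑ b,
      (Dg k a b * xv a * xv b + gm a b * (Dx a k * xv b + xv a * Dx b k)))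
    (j : Fin 3) :
    pdF j - ((∑ l, xv l * Dn j l) + ∑ l, (∑ m, gm l m * xv m) * Dx l j)
      = ∑ l, xv l * (Dn l j - Dn j l) := by
  simp only [hDn, hpdF, Fin.sum_univ_three, hs10, hs20, hs21]
  ring

set_option maxHeartbeats 2000000 in
lemma algMain (xv et pv : Fin 3 → ℝ) (Dn Dx p2 : Fin 3 → Fin 3 → ℝ) (pdF : Fin 3 → ℝ)
    (c0 c1 F : ℝ) (hF : F ≠ 0)
    (hFval : F = ∑ a, xv a * et a)
    (horth : ∑ a, xv a * pv a = 0)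
    (hdiv : ∑ a, Dx a a = 0)
    (hp2 : ∀ a b, p2 a b = p2 b a)
    (hDK : ∀ j, pdF j - ((∑ l, xv l * Dn j l) + ∑ l, et l * Dx l j)
      = ∑ l, xv l * (Dn l j - Dn j l)) :
    ∑ i, (-(F⁻¹ * F⁻¹ * pdF i) * (c0 * xv i + ∑ a, ∑ b, eps a b i * (et a * pv b))
      + F⁻¹ * (c1 * pv i * xv i + c0 * Dx i i
          + ∑ a, ∑ b, eps a b i * (Dn a i * pv b + et a * p2 i b)))
    = -F⁻¹ * ∑ j, ((∑ l, xv l * Dn j l) + ∑ l, et l * Dx l j)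
        * (F⁻¹ * (c0 * xv j + ∑ a, ∑ b, eps a b j * (et a * pv b))) := by
  have hpdFj : ∀ j, pdF j = (∑ l, xv l * (Dn l j - Dn j l))
      + ((∑ l, xv l * Dn j l) + ∑ l, et l * Dx l j) := fun j => by
    have := hDK j; linarith
  have q10 : p2 1 0 = p2 0 1 := hp2 1 0
  have q20 : p2 2 0 = p2 0 2 := hp2 2 0
  have q21 : p2 2 1 = p2 1 2 := hp2 2 1
  have hcancel : F⁻¹ * F = 1 := inv_mul_cancel₀ hF
  have hpd0 := hpdFj 0; have hpd1 := hpdFj 1; have hpd2 := hpdFj 2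
  simp only [Fin.sum_univ_three] at hpd0 hpd1 hpd2 horth hdiv hFval ⊢
  simp only [hpd0, hpd1, hpd2, q10, q20, q21,
    eps_000, eps_001, eps_002, eps_010, eps_011, eps_012, eps_020, eps_021, eps_022,
    eps_100, eps_101, eps_102, eps_110, eps_111, eps_112, eps_120, eps_121, eps_122,
    eps_200, eps_201, eps_202, eps_210, eps_211, eps_212, eps_220, eps_221, eps_222]
  linear_combination (F⁻¹ * c1 + F⁻¹^2 * (et 0 * (Dn 2 1 - Dn 1 2) + et 1 * (Dn 0 2 - Dn 2 0) + et 2 * (Dn 1 0 - Dn 0 1))) * horth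
    + (F⁻¹ * c0) * hdiv + (-(F⁻¹ * (pv 0 * (Dn 2 1 - Dn 1 2) + pv 1 * (Dn 0 2 - Dn 2 0) + pv 2 * (Dn 1 0 - Dn 0 1)))) * hcancel + (F⁻¹^2 * (pv 0 * (Dn 2 1 - Dn 1 2) + pv 1 * (Dn 0 2 - Dn 2 0) + pv 2 * (Dn 1 0 - Dn 0 1))) * hFval

set_option maxHeartbeats 2000000 in
/-- `div B_g = −|ξ|_g^{-2} (L_ξ g)(ξ, B_g)`; in particular `div B_g = 0`
when `ξ` is `g`-Killing. -/
theorem statement13 (U : Set Pt) (hU : IsOpen U)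
    (g : Met3) (hg : SmoothMetricOn g U)
    (ξ : VF) (hξ : ContDiffOn ℝ (⊤ : ℕ∞) ξ U) (hξpos : ∀ x ∈ U, 0 < gnormSq g ξ x)
    (hdivξ : ∀ x ∈ U, ediv ξ x = 0)
    (C : ℝ → ℝ) (hC : ContDiff ℝ (⊤ : ℕ∞) C)
    (ψ : Pt → ℝ) (hψ : ContDiffOn ℝ (⊤ : ℕ∞) ψ U)
    (horth : ∀ x ∈ U, edot ξ (egrad ψ) x = 0) :
    (∀ x ∈ U,
      ediv (Bg g ξ C ψ) x = -(gnormSq g ξ x)⁻¹ * lieMetPair g ξ ξ (Bg g ξ C ψ) x) ∧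
    (IsKillingOn g ξ U → ∀ x ∈ U, ediv (Bg g ξ C ψ) x = 0) := by
  have main : ∀ x ∈ U,
      ediv (Bg g ξ C ψ) x = -(gnormSq g ξ x)⁻¹ * lieMetPair g ξ ξ (Bg g ξ C ψ) x := by
    intro x hx
    have hsymU : ∀ y ∈ U, ∀ a b, g y a b = g y b a := by
      intro y hy a b; have := (hg.2 y hy).1.apply b a; simpa using this
    have hgd : ∀ a b : Fin 3, ∀ y ∈ U, DifferentiableAt ℝ (fun z => g z a b) y := fun a b y hy =>
      ((hg.1 a b).contDiffAt (hU.mem_nhds hy)).differentiableAt (by simp)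
    have hξd : ∀ a : Fin 3, ∀ y ∈ U, DifferentiableAt ℝ (fun z => ξ z a) y := fun a y hy =>
      (((contDiffOn_pi.mp hξ) a).contDiffAt (hU.mem_nhds hy)).differentiableAt (by simp)
    have hψd : ∀ y ∈ U, DifferentiableAt ℝ ψ y := fun y hy =>
      (hψ.contDiffAt (hU.mem_nhds hy)).differentiableAt (by simp)
    have hηd : ∀ a : Fin 3, ∀ y ∈ U, DifferentiableAt ℝ (fun z => ∑ m, g z a m * ξ z m) y :=
      fun a y hy => DifferentiableAt.fun_sum fun m _ => (hgd a m y hy).fun_mul (hξd m y hy)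
    have hFd : ∀ y ∈ U, DifferentiableAt ℝ (fun z => ∑ i, ∑ j, g z i j * ξ z i * ξ z j) y :=
      fun y hy => DifferentiableAt.fun_sum fun i _ => DifferentiableAt.fun_sum fun j _ =>
        ((hgd i j y hy).fun_mul (hξd i y hy)).fun_mul (hξd j y hy)
    have hqd : ∀ b : Fin 3, DifferentiableAt ℝ (fun z => pd b ψ z) x := fun b => pd_diff hU hx hψ b
    have hCd : DifferentiableAt ℝ (fun z => C (ψ z)) x := by
      exact ((hC.differentiable (by simp)).differentiableAt).comp x (hψd x hx)
    have hWd : ∀ i : Fin 3, DifferentiableAt ℝ (fun y =>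
        C (ψ y) * ξ y i + ∑ a, ∑ b, eps a b i * ((∑ m, g y a m * ξ y m) * pd b ψ y)) x := fun i =>
      (hCd.fun_mul (hξd i x hx)).fun_add (DifferentiableAt.fun_sum fun a _ => DifferentiableAt.fun_sum fun b _ =>
        ((differentiableAt_const _).fun_mul ((hηd a x hx).fun_mul (hqd b))))
    have hFne : (∑ i, ∑ j, g x i j * ξ x i * ξ x j) ≠ 0 := ne_of_gt (hξpos x hx)
    have hBE : ∀ y ∈ U, ∀ k : Fin 3, Bg g ξ C ψ y k =
        (∑ i, ∑ j, g y i j * ξ y i * ξ y j)⁻¹ *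
          (C (ψ y) * ξ y k + ∑ a, ∑ b, eps a b k * ((∑ m, g y a m * ξ y m) * pd b ψ y)) :=
      fun y hy k => BgEq U g hg ξ C ψ hy k
    have hDη : ∀ a b : Fin 3, pd b (fun y => ∑ m, g y a m * ξ y m) x
        = ∑ m, (pd b (fun y => g y a m) x * ξ x m + g x a m * pd b (fun y => ξ y m) x) := by
      intro a b
      rw [pd_sum (fun m => (hgd a m x hx).fun_mul (hξd m x hx))]
      exact Finset.sum_congr rfl fun m _ => pd_mul (hgd a m x hx) (hξd m x hx)
    have hpdF : ∀ k : Fin 3, pd k (fun y => ∑ i, ∑ j, g y i j * ξ y i * ξ y j) x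
        = ∑ a, ∑ b, (pd k (fun y => g y a b) x * ξ x a * ξ x b
            + g x a b * (pd k (fun y => ξ y a) x * ξ x b + ξ x a * pd k (fun y => ξ y b) x)) := by
      intro k
      rw [pd_sum (fun a => DifferentiableAt.fun_sum fun b _ =>
        ((hgd a b x hx).fun_mul (hξd a x hx)).fun_mul (hξd b x hx))]
      refine Finset.sum_congr rfl fun a _ => ?_
      rw [pd_sum (fun b => ((hgd a b x hx).fun_mul (hξd a x hx)).fun_mul (hξd b x hx))]
      refine Finset.sum_congr rfl fun b _ => ?_
      rw [pd_mul ((hgd a b x hx).fun_mul (hξd a x hx)) (hξd b x hx),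
        pd_mul (hgd a b x hx) (hξd a x hx)]
      ring
    have hdivEq : ediv (Bg g ξ C ψ) x = ∑ i, pd i (fun y =>
        (∑ a, ∑ b, g y a b * ξ y a * ξ y b)⁻¹ *
          (C (ψ y) * ξ y i + ∑ a, ∑ b, eps a b i * ((∑ m, g y a m * ξ y m) * pd b ψ y))) x := by
      unfold ediv
      refine Finset.sum_congr rfl fun i _ => ?_
      refine pd_congr ?_
      filter_upwards [hU.mem_nhds hx] with y hy
      exact hBE y hy i
    have hpdBE : ∀ i : Fin 3, pd i (fun y =>
        (∑ a, ∑ b, g y a b * ξ y a * ξ y b)⁻¹ *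
          (C (ψ y) * ξ y i + ∑ a, ∑ b, eps a b i * ((∑ m, g y a m * ξ y m) * pd b ψ y))) x
      = -((∑ a, ∑ b, g x a b * ξ x a * ξ x b)⁻¹ * (∑ a, ∑ b, g x a b * ξ x a * ξ x b)⁻¹
            * pd i (fun y => ∑ a, ∑ b, g y a b * ξ y a * ξ y b) x)
          * (C (ψ x) * ξ x i + ∑ a, ∑ b, eps a b i * ((∑ m, g x a m * ξ x m) * pd b ψ x))
        + (∑ a, ∑ b, g x a b * ξ x a * ξ x b)⁻¹
          * (deriv C (ψ x) * pd i ψ x * ξ x i + C (ψ x) * pd i (fun y => ξ y i) x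
            + ∑ a, ∑ b, eps a b i * (pd i (fun y => ∑ m, g y a m * ξ y m) x * pd b ψ x
                + (∑ m, g x a m * ξ x m) * pd i (fun y => pd b ψ y) x)) := by
      intro i
      have hW : pd i (fun y =>
          C (ψ y) * ξ y i + ∑ a, ∑ b, eps a b i * ((∑ m, g y a m * ξ y m) * pd b ψ y)) x
          = deriv C (ψ x) * pd i ψ x * ξ x i + C (ψ x) * pd i (fun y => ξ y i) x
            + ∑ a, ∑ b, eps a b i * (pd i (fun y => ∑ m, g y a m * ξ y m) x * pd b ψ x
                + (∑ m, g x a m * ξ x m) * pd i (fun y => pd b ψ y) x) := by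
        rw [pd_add (hCd.fun_mul (hξd i x hx)) (DifferentiableAt.fun_sum fun a _ =>
          DifferentiableAt.fun_sum fun b _ =>
            ((differentiableAt_const _).fun_mul ((hηd a x hx).fun_mul (hqd b))))]
        rw [pd_mul hCd (hξd i x hx)]
        rw [pd_comp ((hC.differentiable (by simp)).differentiableAt) (hψd x hx)]
        rw [pd_sum (fun a => DifferentiableAt.fun_sum fun b _ =>
          ((differentiableAt_const _).fun_mul ((hηd a x hx).fun_mul (hqd b))))]
        have hinner : ∀ a : Fin 3,
            pd i (fun y => ∑ b, eps a b i * ((∑ m, g y a m * ξ y m) * pd b ψ y)) x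
            = ∑ b, eps a b i * (pd i (fun y => ∑ m, g y a m * ξ y m) x * pd b ψ x
                + (∑ m, g x a m * ξ x m) * pd i (fun y => pd b ψ y) x) := by
          intro a
          rw [pd_sum (fun b => (differentiableAt_const _).fun_mul ((hηd a x hx).fun_mul (hqd b)))]
          refine Finset.sum_congr rfl fun b _ => ?_
          rw [pd_const_mul ((hηd a x hx).fun_mul (hqd b)) (eps a b i),
            pd_mul (hηd a x hx) (hqd b)]
        rw [Finset.sum_congr rfl (fun a _ => hinner a)]
      rw [pd_mul ((hFd x hx).fun_inv hFne) (hWd i), pd_inv (hFd x hx) hFne, hW]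
      ring
    have hFval : (∑ i, ∑ j, g x i j * ξ x i * ξ x j)
        = ∑ a, ξ x a * ∑ m, g x a m * ξ x m := by
      simp only [Fin.sum_univ_three]; ring
    have horth' : ∑ a, ξ x a * pd a ψ x = 0 := by
      have := horth x hx; simpa [edot, egrad] using this
    have hdiv' : ∑ a : Fin 3, pd a (fun y => ξ y a) x = 0 := by
      have := hdivξ x hx; simpa [ediv] using this
    have hp2' : ∀ a b : Fin 3, pd a (fun y => pd b ψ y) x = pd b (fun y => pd a ψ y) x :=
      pd_symm hU hx hψ
    have hDK : ∀ j : Fin 3, pd j (fun y => ∑ i, ∑ j, g y i j * ξ y i * ξ y j) x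
        - ((∑ l, ξ x l * pd l (fun y => ∑ m, g y j m * ξ y m) x)
          + ∑ l, (∑ m, g x l m * ξ x m) * pd j (fun y => ξ y l) x)
        = ∑ l, ξ x l * (pd j (fun y => ∑ m, g y l m * ξ y m) x
            - pd l (fun y => ∑ m, g y j m * ξ y m) x) := by
      intro j
      exact algDK (fun a b => g x a b) (hsymU x hx 1 0) (hsymU x hx 2 0) (hsymU x hx 2 1)
        (ξ x) (fun k a b => pd k (fun y => g y a b) x) (fun l k => pd k (fun y => ξ y l) x)
        (fun a k => pd k (fun y => ∑ m, g y a m * ξ y m) x)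
        (fun a k => hDη a k) (fun k => pd k (fun y => ∑ i, ∑ j, g y i j * ξ y i * ξ y j) x)
        (fun k => hpdF k) j
    have halg : (∑ i, (-( (∑ a, ∑ b, g x a b * ξ x a * ξ x b)⁻¹
            * (∑ a, ∑ b, g x a b * ξ x a * ξ x b)⁻¹
            * pd i (fun y => ∑ a, ∑ b, g y a b * ξ y a * ξ y b) x)
          * (C (ψ x) * ξ x i + ∑ a, ∑ b, eps a b i * ((∑ m, g x a m * ξ x m) * pd b ψ x))
        + (∑ a, ∑ b, g x a b * ξ x a * ξ x b)⁻¹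
          * (deriv C (ψ x) * pd i ψ x * ξ x i + C (ψ x) * pd i (fun y => ξ y i) x
            + ∑ a, ∑ b, eps a b i * (pd i (fun y => ∑ m, g y a m * ξ y m) x * pd b ψ x
                + (∑ m, g x a m * ξ x m) * pd i (fun y => pd b ψ y) x))))
        = -(∑ i, ∑ j, g x i j * ξ x i * ξ x j)⁻¹
          * ∑ j, ((∑ l, ξ x l * pd l (fun y => ∑ m, g y j m * ξ y m) x)
              + ∑ l, (∑ m, g x l m * ξ x m) * pd j (fun y => ξ y l) x)
            * ((∑ i, ∑ j, g x i j * ξ x i * ξ x j)⁻¹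
              * (C (ψ x) * ξ x j
                + ∑ a, ∑ b, eps a b j * ((∑ m, g x a m * ξ x m) * pd b ψ x))) := by
      exact algMain (ξ x) (fun a => ∑ m, g x a m * ξ x m) (fun b => pd b ψ x)
        (fun a k => pd k (fun y => ∑ m, g y a m * ξ y m) x)
        (fun l k => pd k (fun y => ξ y l) x)
        (fun a b => pd a (fun y => pd b ψ y) x)
        (fun k => pd k (fun y => ∑ a, ∑ b, g y a b * ξ y a * ξ y b) x)
        (C (ψ x)) (deriv C (ψ x)) (∑ i, ∑ j, g x i j * ξ x i * ξ x j)
        hFne hFval horth' hdiv' hp2' hDK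
    have hpair : lieMetPair g ξ ξ (Bg g ξ C ψ) x
        = ∑ j, ((∑ l, ξ x l * pd l (fun y => ∑ m, g y j m * ξ y m) x)
            + ∑ l, (∑ m, g x l m * ξ x m) * pd j (fun y => ξ y l) x)
          * ((∑ i, ∑ j, g x i j * ξ x i * ξ x j)⁻¹
            * (C (ψ x) * ξ x j
              + ∑ a, ∑ b, eps a b j * ((∑ m, g x a m * ξ x m) * pd b ψ x))) := by
      unfold lieMetPair
      rw [Finset.sum_comm]
      refine Finset.sum_congr rfl fun j _ => ?_
      rw [← lieContract U hU g hg ξ hξ hx j, Finset.sum_mul]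
      refine Finset.sum_congr rfl fun i _ => ?_
      rw [hBE x hx j]
      ring
    calc ediv (Bg g ξ C ψ) x
        = ∑ i, pd i (fun y =>
            (∑ a, ∑ b, g y a b * ξ y a * ξ y b)⁻¹ *
              (C (ψ y) * ξ y i
                + ∑ a, ∑ b, eps a b i * ((∑ m, g y a m * ξ y m) * pd b ψ y))) x := hdivEq
      _ = ∑ i, (-( (∑ a, ∑ b, g x a b * ξ x a * ξ x b)⁻¹
            * (∑ a, ∑ b, g x a b * ξ x a * ξ x b)⁻¹
            * pd i (fun y => ∑ a, ∑ b, g y a b * ξ y a * ξ y b) x)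
          * (C (ψ x) * ξ x i + ∑ a, ∑ b, eps a b i * ((∑ m, g x a m * ξ x m) * pd b ψ x))
        + (∑ a, ∑ b, g x a b * ξ x a * ξ x b)⁻¹
          * (deriv C (ψ x) * pd i ψ x * ξ x i + C (ψ x) * pd i (fun y => ξ y i) x
            + ∑ a, ∑ b, eps a b i * (pd i (fun y => ∑ m, g y a m * ξ y m) x * pd b ψ x
                + (∑ m, g x a m * ξ x m) * pd i (fun y => pd b ψ y) x))) :=
          Finset.sum_congr rfl fun i _ => hpdBE i
      _ = -(∑ i, ∑ j, g x i j * ξ x i * ξ x j)⁻¹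
          * ∑ j, ((∑ l, ξ x l * pd l (fun y => ∑ m, g y j m * ξ y m) x)
              + ∑ l, (∑ m, g x l m * ξ x m) * pd j (fun y => ξ y l) x)
            * ((∑ i, ∑ j, g x i j * ξ x i * ξ x j)⁻¹
              * (C (ψ x) * ξ x j
                + ∑ a, ∑ b, eps a b j * ((∑ m, g x a m * ξ x m) * pd b ψ x))) := halg
      _ = -(gnormSq g ξ x)⁻¹ * lieMetPair g ξ ξ (Bg g ξ C ψ) x := by rw [hpair]; rfl
  refine ⟨main, fun hk x hx => ?_⟩
  rw [main x hx]
  unfold lieMetPair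
  simp [hk x hx]
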